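/- arXiv:2602.16473 — 5 statements merged into one kernel-verified Lean document; each statement's English description precedes it below -/
import Mathlib

section
/- The C-RASP program with rules C_[ := #[ , C_] := #] , V := (C_[ < C_]), D := (#V = 0 ∧ C_[ = C_]) accepts a nonempty word w over the alphabet {[, ]} if and only if w is a Dyck-1 word, i.e., every prefix of w has at least as many [ as ], and w has equally many [ and ]. -/
/- Letters: `true` = '[' , `false` = ']'. Positions are 1-indexed;
   the prefix up to position `j` is `w.take j`. -/

/-- `C_[` at position `j`: number of '[' among the first `j` letters. -/
def cntL (w : List Bool) (j : ℕ) : ℕ := (w.take j).count true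

/-- `C_]` at position `j`: number of ']' among the first `j` letters. -/
def cntR (w : List Bool) (j : ℕ) : ℕ := (w.take j).count false

/-- The Boolean rule `V := C_[ < C_]` at position `i`. -/
def Vrule (w : List Bool) (i : ℕ) : Bool := decide (cntL w i < cntR w i)

/-- `#V` at position `j`: number of positions `1 ≤ i ≤ j` where `V` holds. -/
def cntV (w : List Bool) (j : ℕ) : ℕ :=
  ((Finset.Icc 1 j).filter (fun i => Vrule w i = true)).card

/-- The Boolean rule `D := (#V = 0 ∧ C_[ = C_])` at position `j`. -/
def Drule (w : List Bool) (j : ℕ) : Prop := cntV w j = 0 ∧ cntL w j = cntR w j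

/-- The program accepts `w` if the last rule `D` holds at the final position. -/
def acceptsDyck (w : List Bool) : Prop := Drule w w.length

/-- `w` is a Dyck-1 word: every prefix has at least as many '[' as ']',
    and the whole word has equally many '[' and ']'. -/
def isDyck (w : List Bool) : Prop :=
  (∀ j ≤ w.length, cntR w j ≤ cntL w j) ∧ cntL w w.length = cntR w w.length

theorem dyck_crasp_correct (w : List Bool) (hw : w ≠ []) :
    acceptsDyck w ↔ isDyck w := by
  have key : cntV w w.length = 0 ↔ ∀ j ≤ w.length, cntR w j ≤ cntL w j := by
    unfold cntV
    rw [Finset.card_eq_zero, Finset.filter_eq_empty_iff]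
    constructor
    · intro h j hj
      rcases Nat.eq_zero_or_pos j with rfl | hp
      · simp [cntL, cntR]
      · have := h (Finset.mem_Icc.mpr ⟨hp, hj⟩)
        simp only [Vrule, decide_eq_true_eq] at this
        omega
    · intro h j hj
      simp only [Vrule, decide_eq_true_eq]
      rw [Finset.mem_Icc] at hj
      exact not_lt.mpr (h j hj.2)
  unfold acceptsDyck Drule isDyck
  rw [key]
end

section
/- For every nonempty word w over {[, ]} and every position j (1-indexed), the value of the rule D in the Dyck C-RASP program at position j equals true if and only if the prefix a_1...a_j is a Dyck-1 word. -/
lemma cntL_of_length_le {u : List Bool} {i : ℕ} (h : u.length ≤ i) : cntL u i = u.count true := by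
  rw [cntL, List.take_of_length_le h]

lemma cntR_of_length_le {u : List Bool} {i : ℕ} (h : u.length ≤ i) : cntR u i = u.count false := by
  rw [cntR, List.take_of_length_le h]

lemma cntL_take (w : List Bool) (j i : ℕ) : cntL (w.take j) i = cntL w (min i j) := by
  simp [cntL, List.take_take]

lemma cntR_take (w : List Bool) (j i : ℕ) : cntR (w.take j) i = cntR w (min i j) := by
  simp [cntR, List.take_take]

/-- Past the end of a balanced word the prefix condition holds trivially, so it may be asked
at every `i`. -/
lemma isDyck_iff (u : List Bool) :
    isDyck u ↔ (∀ i, cntR u i ≤ cntL u i) ∧ u.count true = u.count false := by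
  have hlen : cntL u u.length = u.count true ∧ cntR u u.length = u.count false :=
    ⟨cntL_of_length_le le_rfl, cntR_of_length_le le_rfl⟩
  refine ⟨fun ⟨hpre, hbal⟩ => ⟨fun i => ?_, by rwa [← hlen.1, ← hlen.2]⟩,
    fun ⟨hpre, hbal⟩ => ⟨fun i _ => hpre i, by rwa [hlen.1, hlen.2]⟩⟩
  rcases le_total i u.length with hi | hi
  · exact hpre i hi
  · rw [cntL_of_length_le hi, cntR_of_length_le hi, ← hlen.1, ← hlen.2, hbal]

lemma isDyck_take_iff (w : List Bool) (j : ℕ) :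
    isDyck (w.take j) ↔ (∀ i ≤ j, cntR w i ≤ cntL w i) ∧ cntL w j = cntR w j := by
  rw [isDyck_iff]
  refine and_congr ⟨fun h i hi => ?_, fun h i => ?_⟩ Iff.rfl
  · simpa [cntL_take, cntR_take, hi] using h i
  · simpa only [cntL_take, cntR_take] using h _ (min_le_right i j)

lemma cntV_eq_zero_iff (w : List Bool) (j : ℕ) :
    cntV w j = 0 ↔ ∀ i ≤ j, cntR w i ≤ cntL w i := by
  simp only [cntV, Vrule, Finset.card_eq_zero, Finset.filter_eq_empty_iff, Finset.mem_Icc,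
    decide_eq_true_eq, not_lt]
  refine ⟨fun h i hi => ?_, fun h i hi => h i hi.2⟩
  rcases Nat.eq_zero_or_pos i with rfl | hpos
  · simp [cntL, cntR]
  · exact h ⟨hpos, hi⟩

theorem dyck_D_char_general (w : List Bool) (j : ℕ) :
    Drule w j ↔ isDyck (w.take j) := by
  rw [Drule, cntV_eq_zero_iff, isDyck_take_iff]

theorem dyck_D_char (w : List Bool) (hw : w ≠ []) (j : ℕ)
    (hj1 : 1 ≤ j) (hjn : j ≤ w.length) :
    Drule w j ↔ isDyck (w.take j) :=
  dyck_D_char_general w j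
end

section
/- With the safe previous operator pre^i as defined, for any Boolean stream e with indicator stream C_e(j) = if e(j) then 1 else 0, and any naturals r_s ≤ r_e, the stream Σ_{r_s ≤ i ≤ r_e} pre^i(C_e) at position j equals the number of positions k with j - r_e ≤ k ≤ j - r_s (and k ≥ 0) at which e(k) is true. Hence the Lustre encoding correctly computes the C-RASP windowed count #_{r_s,r_e}(e). -/
/-- The safe `i`-fold previous operator. -/
def preN : ℕ → (ℕ → ℤ) → (ℕ → ℤ)
  | 0, s => s
  | i + 1, s => fun j => if j = 0 then 0 else preN i s (j - 1)

theorem preN_apply (i : ℕ) (s : ℕ → ℤ) (j : ℕ) :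
    preN i s j = if i ≤ j then s (j - i) else 0 := by
  induction i generalizing j with
  | zero => simp [preN]
  | succ i ih =>
    cases j with
    | zero => simp [preN]
    | succ j => simp [preN, ih, Nat.succ_sub_succ]

-- The delay `i` reads position `j - i`, and `i ↦ j - i` is a bijection onto the window.
theorem sum_preN_Icc_eq_sum_window (s : ℕ → ℤ) (rs re j : ℕ) :
    ∑ i ∈ Finset.Icc rs re, preN i s j
      = ∑ k ∈ (Finset.range (j + 1)).filter (fun k => j - re ≤ k ∧ k + rs ≤ j), s k := by
  simp_rw [preN_apply]
  rw [← Finset.sum_filter]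
  refine Finset.sum_nbij' (fun i => j - i) (fun k => j - k) ?_ ?_ ?_ ?_ (fun _ _ => rfl) <;>
  · intro x hx
    simp only [Finset.mem_filter, Finset.mem_Icc, Finset.mem_range] at hx ⊢
    omega

-- `k ≤ j - rs` is written `k + rs ≤ j`; the truncated `j - re` encodes the clipping at `k ≥ 0`.
theorem windowed_count_correct_general (e : ℕ → Bool) (rs re j : ℕ) :
    (∑ i ∈ Finset.Icc rs re, preN i (fun k => if e k then (1 : ℤ) else 0) j)
      = ((Finset.range (j + 1)).filter
          (fun k => j - re ≤ k ∧ k + rs ≤ j ∧ e k = true)).card := by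
  rw [sum_preN_Icc_eq_sum_window, Finset.sum_boole, Finset.filter_filter]
  simp only [and_assoc]

/-- Correctness of the Lustre encoding of the windowed count `#_{r_s,r_e}(e)`:
`Σ_{r_s ≤ i ≤ r_e} pre^i(C_e)` at position `j` equals the number of valid positions `k`
with `j - r_e ≤ k ≤ j - r_s` where `e k` is true (here `k ≤ j - r_s` is expressed as
`k + r_s ≤ j`, and truncated subtraction `j - r_e` accounts for `k ≥ 0`). -/
theorem windowed_count_correct (e : ℕ → Bool) (rs re j : ℕ) (h : rs ≤ re) :
    (∑ i ∈ Finset.Icc rs re, preN i (fun k => if e k then (1 : ℤ) else 0) j)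
      = ((Finset.range (j + 1)).filter
          (fun k => j - re ≤ k ∧ k + rs ≤ j ∧ e k = true)).card :=
  windowed_count_correct_general e rs re j
end

section
/- The C-RASP program for PT-2 with rules: A := a, B := b, CA := #A, L1 := (1 ≤ CA), QB := (B ∧ L1), CB := #QB, Out := (1 ≤ CB) accepts a nonempty word w over {a,b} if and only if there exist indices i < j with w[i] = a and w[j] = b (a occurs before a later b as a subsequence). -/
/- Letters: `true` = 'a', `false` = 'b'. Positions are 1-indexed. -/

/-- `CA := #A` at position `j`. -/
def cntA (w : List Bool) (j : ℕ) : ℕ :=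
  ((Finset.Icc 1 j).filter (fun i => w[i - 1]? = some true)).card

/-- `QB := (B ∧ L1)` where `L1 := (1 ≤ CA)`. -/
def QB (w : List Bool) (i : ℕ) : Bool :=
  decide (w[i - 1]? = some false ∧ 1 ≤ cntA w i)

/-- `CB := #QB` at position `j`. -/
def cntQB (w : List Bool) (j : ℕ) : ℕ :=
  ((Finset.Icc 1 j).filter (fun i => QB w i = true)).card

/-- Acceptance: `Out := (1 ≤ CB)` at the final position. -/
def acceptsPT2 (w : List Bool) : Prop := 1 ≤ cntQB w w.length

theorem pt2_correct (w : List Bool) (hw : w ≠ []) :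
    acceptsPT2 w ↔ ∃ i j : ℕ, i < j ∧ w[i]? = some true ∧ w[j]? = some false := by
  constructor
  · intro h
    unfold acceptsPT2 cntQB at h
    rw [Finset.one_le_card] at h
    obtain ⟨p, hp⟩ := Finset.Nonempty.exists_mem h
    rw [Finset.mem_filter, Finset.mem_Icc] at hp
    obtain ⟨⟨hp1, hplen⟩, hq⟩ := hp
    unfold QB at hq
    rw [decide_eq_true_iff] at hq
    obtain ⟨hb, hca⟩ := hq
    unfold cntA at hca
    rw [Finset.one_le_card] at hca
    obtain ⟨k, hk⟩ := Finset.Nonempty.exists_mem hca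
    rw [Finset.mem_filter, Finset.mem_Icc] at hk
    obtain ⟨⟨hk1, hkp⟩, ha⟩ := hk
    refine ⟨k - 1, p - 1, ?_, ha, hb⟩
    have hkp' : k ≠ p := by
      intro h'; rw [h'] at ha; rw [ha] at hb; simp at hb
    omega
  · rintro ⟨i, j, hij, ha, hb⟩
    have hjlen : j < w.length := by
      by_contra h'
      rw [List.getElem?_eq_none (by omega)] at hb
      simp at hb
    unfold acceptsPT2 cntQB
    rw [Finset.one_le_card]
    refine ⟨j + 1, ?_⟩
    rw [Finset.mem_filter, Finset.mem_Icc]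
    refine ⟨⟨by omega, by omega⟩, ?_⟩
    unfold QB
    rw [decide_eq_true_iff]
    constructor
    · simpa using hb
    · unfold cntA
      rw [Finset.one_le_card]
      refine ⟨i + 1, ?_⟩
      rw [Finset.mem_filter, Finset.mem_Icc]
      exact ⟨⟨by omega, by omega⟩, by simpa using ha⟩
end

section
/- The C-RASP program for a^n b^n c^n given in the paper (with rules Qa := a, Qb := b, Qc := c, Ca := #Qa, Cb := #Qb, Cc := #Qc, A := (Cb + Cc = 0), B := (Cc = 0), QaA := Qa ∧ A, QbB := Qb ∧ B, CA := #QaA, CB := #QbB, Ga := (CA = Ca), Gb := (CB = Cb), Gabc := (Ca = Cb ∧ Cb = Cc), Out := Ga ∧ Gb ∧ Gabc) accepts a nonempty word w over {a,b,c} if and only if w = a^n b^n c^n for some n ≥ 1. -/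
/- Letters over Σ = {a, b, c} modeled as `Fin 3`: 0 = a, 1 = b, 2 = c.
   Positions are 1-indexed. -/

/-- Generic prefix count. -/
def cnt (p : ℕ → Bool) (j : ℕ) : ℕ := ((Finset.Icc 1 j).filter (fun i => p i = true)).card

def ca (w : List (Fin 3)) : ℕ → ℕ := cnt (fun i => decide (w[i - 1]? = some 0))
def cb (w : List (Fin 3)) : ℕ → ℕ := cnt (fun i => decide (w[i - 1]? = some 1))
def cc (w : List (Fin 3)) : ℕ → ℕ := cnt (fun i => decide (w[i - 1]? = some 2))

/-- `A := (Cb + Cc = 0)`. -/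
def Arule (w : List (Fin 3)) (i : ℕ) : Bool := decide (cb w i + cc w i = 0)

/-- `B := (Cc = 0)`. -/
def Brule (w : List (Fin 3)) (i : ℕ) : Bool := decide (cc w i = 0)

/-- `QaA := Qa ∧ A`. -/
def QaA (w : List (Fin 3)) (i : ℕ) : Bool := decide (w[i - 1]? = some 0) && Arule w i

/-- `QbB := Qb ∧ B`. -/
def QbB (w : List (Fin 3)) (i : ℕ) : Bool := decide (w[i - 1]? = some 1) && Brule w i

def cA (w : List (Fin 3)) : ℕ → ℕ := cnt (QaA w)
def cB (w : List (Fin 3)) : ℕ → ℕ := cnt (QbB w)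

/-- Acceptance: `Out := Ga ∧ Gb ∧ Gabc` at the final position `n`, with
`Ga := (CA = Ca)`, `Gb := (CB = Cb)`, `Gabc := (Ca = Cb ∧ Cb = Cc)`. -/
def acceptsAnBnCn (w : List (Fin 3)) : Prop :=
  cA w w.length = ca w w.length ∧ cB w w.length = cb w w.length ∧
    (ca w w.length = cb w w.length ∧ cb w w.length = cc w w.length)

/-! ### Auxiliary lemmas -/

lemma cnt_zero (p : ℕ → Bool) : cnt p 0 = 0 := by simp [cnt]

lemma cnt_succ (p : ℕ → Bool) (j : ℕ) :
    cnt p (j+1) = cnt p j + (if p (j+1) then 1 else 0) := by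
  unfold cnt
  rw [show Finset.Icc 1 (j+1) = insert (j+1) (Finset.Icc 1 j) by
    ext x; simp [Finset.mem_Icc]; omega]
  rw [Finset.filter_insert]
  split
  · rw [Finset.card_insert_of_notMem (by simp)]
  · simp

lemma cnt_mono (p : ℕ → Bool) {i j : ℕ} (h : i ≤ j) : cnt p i ≤ cnt p j := by
  apply Finset.card_le_card
  intro x hx
  simp only [Finset.mem_filter, Finset.mem_Icc] at *
  exact ⟨⟨hx.1.1, le_trans hx.1.2 h⟩, hx.2⟩

lemma cnt_le (p : ℕ → Bool) (j : ℕ) : cnt p j ≤ j := by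
  calc cnt p j ≤ (Finset.Icc 1 j).card := Finset.card_le_card (Finset.filter_subset _ _)
  _ = j := by rw [Nat.card_Icc]; omega

lemma cnt_pos (p : ℕ → Bool) {i j : ℕ} (h1 : 1 ≤ i) (h2 : i ≤ j) (hp : p i = true) :
    1 ≤ cnt p j := by
  apply Finset.card_pos.mpr
  exact ⟨i, Finset.mem_filter.mpr ⟨Finset.mem_Icc.mpr ⟨h1, h2⟩, hp⟩⟩

lemma cnt_le_add (p : ℕ → Bool) {a b : ℕ} (h : a ≤ b) : cnt p b ≤ cnt p a + (b - a) := by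
  induction b with
  | zero => simp [cnt_zero]
  | succ b ih =>
    rcases Nat.lt_or_ge a (b+1) with h' | h'
    · have := ih (by omega)
      rw [cnt_succ]
      split <;> omega
    · have ha : a = b + 1 := by omega
      subst ha; simp

lemma cnt_stable (p : ℕ → Bool) {k L : ℕ} (h : k ≤ L)
    (hp : ∀ i, k < i → i ≤ L → p i = false) : cnt p L = cnt p k := by
  induction L with
  | zero =>
    have hk : k = 0 := by omega
    subst hk; rfl
  | succ L ih =>
    rcases Nat.lt_or_ge k (L+1) with h' | h'
    · rw [cnt_succ, hp (L+1) (by omega) (by omega)]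
      simp [ih (by omega) (fun i h1 h2 => hp i h1 (by omega))]
    · have hk : k = L + 1 := by omega
      subst hk; rfl

lemma cnt_eq_zero (p : ℕ → Bool) (j : ℕ)
    (h : ∀ i, 1 ≤ i → i ≤ j → p i = false) : cnt p j = 0 := by
  rw [cnt_stable p (Nat.zero_le j) (fun i h1 h2 => h i (by omega) h2), cnt_zero]

lemma cnt_and_eq (p q : ℕ → Bool) (L : ℕ)
    (h : cnt (fun i => p i && q i) L = cnt p L) :
    ∀ i, 1 ≤ i → i ≤ L → p i = true → q i = true := by
  intro i h1 h2 hp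
  have hsub : (Finset.Icc 1 L).filter (fun i => (p i && q i) = true) ⊆
      (Finset.Icc 1 L).filter (fun i => p i = true) := by
    intro x hx
    simp only [Finset.mem_filter, Bool.and_eq_true] at *
    exact ⟨hx.1, hx.2.1⟩
  have heq := Finset.eq_of_subset_of_card_le hsub (le_of_eq h.symm)
  have : i ∈ (Finset.Icc 1 L).filter (fun i => p i = true) := by
    simp [Finset.mem_Icc, h1, h2, hp]
  rw [← heq] at this
  simp only [Finset.mem_filter, Bool.and_eq_true] at this
  exact this.2.2

lemma fin3_cases : ∀ v : Fin 3, v = 0 ∨ v = 1 ∨ v = 2 := by decide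

lemma sum_counts (w : List (Fin 3)) : ∀ j, j ≤ w.length → ca w j + cb w j + cc w j = j := by
  intro j
  induction j with
  | zero => intro _; simp [ca, cb, cc, cnt_zero]
  | succ j ih =>
    intro hj
    have hlt : j < w.length := by omega
    have hsome : w[(j+1) - 1]? = some (w[j]'hlt) := by
      simp [List.getElem?_eq_getElem hlt]
    simp only [ca, cb, cc] at *
    rw [cnt_succ, cnt_succ, cnt_succ]
    simp only [hsome]
    have hone : ∀ v : Fin 3,
        ((if (decide ((some v : Option (Fin 3)) = some 0)) then 1 else 0) : ℕ) +
        (if (decide ((some v : Option (Fin 3)) = some 1)) then 1 else 0) +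
        (if (decide ((some v : Option (Fin 3)) = some 2)) then 1 else 0) = 1 := by decide
    have := hone (w[j]'hlt)
    have hih := ih (by omega)
    omega

lemma getw (n m : ℕ) :
    (List.replicate n (0:Fin 3) ++ List.replicate n 1 ++ List.replicate n 2)[m]? =
      if m < n then some 0 else if m < 2*n then some 1 else if m < 3*n then some 2
        else none := by
  rcases Nat.lt_or_ge m n with h1 | h1
  · rw [List.getElem?_append_left (by simp [List.length_append]; omega),
      List.getElem?_append_left (by simp; omega)]
    simp [List.getElem?_replicate, h1]
  rcases Nat.lt_or_ge m (2*n) with h2 | h2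
  · rw [List.getElem?_append_left (by simp [List.length_append]; omega),
      List.getElem?_append_right (by simp; omega)]
    simp only [List.length_replicate, List.getElem?_replicate]
    rw [if_pos (by omega), if_neg (by omega), if_pos (by omega)]
  · rw [List.getElem?_append_right (by simp [List.length_append]; omega)]
    simp only [List.length_append, List.length_replicate, List.getElem?_replicate]
    rcases Nat.lt_or_ge m (3*n) with h3 | h3
    · rw [if_pos (by omega), if_neg (by omega), if_neg (by omega), if_pos (by omega)]
    · rw [if_neg (by omega), if_neg (by omega), if_neg (by omega), if_neg (by omega)]

lemma lenw (n : ℕ) :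
    (List.replicate n (0:Fin 3) ++ List.replicate n 1 ++ List.replicate n 2).length = 3*n := by
  simp [List.length_append]; omega

theorem anbncn_correct (w : List (Fin 3)) (hw : w ≠ []) :
    acceptsAnBnCn w ↔ ∃ n : ℕ, 1 ≤ n ∧
      w = List.replicate n 0 ++ List.replicate n 1 ++ List.replicate n 2 := by
  constructor
  · rintro ⟨hGa, hGb, hab, hbc⟩
    set L := w.length with hLdef
    set n := ca w L with hndef
    have hsum := sum_counts w L le_rfl
    have hL3 : L = 3 * n := by omega
    have hL1 : 1 ≤ L := by
      have := List.length_pos_iff.mpr hw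
      omega
    have hn1 : 1 ≤ n := by omega
    -- every a-position satisfies A, every b-position satisfies B
    have hA : ∀ i, 1 ≤ i → i ≤ L → w[i-1]? = some 0 → cb w i + cc w i = 0 := by
      intro i h1 h2 hp
      have := cnt_and_eq (fun i => decide (w[i-1]? = some 0)) (Arule w) L hGa i h1 h2
        (by simp [hp])
      simpa [Arule] using this
    have hB : ∀ i, 1 ≤ i → i ≤ L → w[i-1]? = some 1 → cc w i = 0 := by
      intro i h1 h2 hp
      have := cnt_and_eq (fun i => decide (w[i-1]? = some 1)) (Brule w) L hGb i h1 h2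
        (by simp [hp])
      simpa [Brule] using this
    refine ⟨n, hn1, ?_⟩
    apply List.ext_getElem?
    intro m
    rw [getw]
    rcases Nat.lt_or_ge m L with hmL | hmL
    · have hm : w[m]? = some (w[m]'hmL) := by simp [List.getElem?_eq_getElem hmL]
      have hm' : w[(m+1)-1]? = some (w[m]'hmL) := by simpa using hm
      rcases fin3_cases (w[m]'hmL) with hv | hv | hv
      · -- letter is a: must have m < n
        rw [hm, hv]
        rw [if_pos ?_]
        by_contra hmn
        push_neg at hmn
        -- all a positions are ≤ m is false; instead: cb+cc (m+1) = 0 so prefix all a's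
        have h0 : cb w (m+1) + cc w (m+1) = 0 :=
          hA (m+1) (by omega) (by omega) (by simp only [Nat.add_sub_cancel]; rw [hm, hv])
        have hsum' := sum_counts w (m+1) (by omega)
        have hca : ca w (m+1) = m + 1 := by omega
        have : ca w (m+1) ≤ ca w L := cnt_mono _ (by omega)
        omega
      · -- letter is b: must have n ≤ m < 2n
        rw [hm, hv]
        have hcc1 : cc w (m+1) = 0 :=
          hB (m+1) (by omega) (by omega) (by simp only [Nat.add_sub_cancel]; rw [hm, hv])
        -- not m < n : else cb(m+1) ≥ 1 contradicts all a's before b's... show n ≤ m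
        have hge : n ≤ m := by
          by_contra hmn
          push_neg at hmn
          -- position m+1 is a b, so every a-position is ≤ m
          have hbpos : 1 ≤ cb w (m+1) :=
            cnt_pos _ (i := m+1) (by omega) le_rfl (by simp only [decide_eq_true_eq, Nat.add_sub_cancel]; rw [hm, hv])
          have hstab : ca w L = ca w m := by
            apply cnt_stable _ (by omega)
            intro i hi1 hi2
            by_contra hp
            simp only [Bool.not_eq_false, decide_eq_true_eq] at hp
            have h0 := hA i (by omega) hi2 hp
            have : cb w (m+1) ≤ cb w i := cnt_mono _ (by omega)
            omega
          have : ca w m ≤ m := cnt_le _ m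
          omega
        have hlt2 : m < 2 * n := by
          by_contra hm2
          push_neg at hm2
          -- c count is at most L - (m+1) < n
          have := cnt_le_add (fun i => decide (w[i-1]? = some 2)) (a := m+1) (b := L) (by omega)
          have hccL : cc w L = n := by omega
          have : cc w L ≤ cc w (m+1) + (L - (m+1)) := this
          omega
        rw [if_neg (by omega), if_pos hlt2]
      · -- letter is c: must have 2n ≤ m < 3n
        rw [hm, hv]
        have hge : 2 * n ≤ m := by
          by_contra hm2
          push_neg at hm2
          -- every a- and b-position is ≤ m
          have hcpos : 1 ≤ cc w (m+1) :=
            cnt_pos _ (i := m+1) (by omega) le_rfl (by simp only [decide_eq_true_eq, Nat.add_sub_cancel]; rw [hm, hv])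
          have hstaba : ca w L = ca w m := by
            apply cnt_stable _ (by omega)
            intro i hi1 hi2
            by_contra hp
            simp only [Bool.not_eq_false, decide_eq_true_eq] at hp
            have h0 := hA i (by omega) hi2 hp
            have : cc w (m+1) ≤ cc w i := cnt_mono _ (by omega)
            omega
          have hstabb : cb w L = cb w m := by
            apply cnt_stable _ (by omega)
            intro i hi1 hi2
            by_contra hp
            simp only [Bool.not_eq_false, decide_eq_true_eq] at hp
            have h0 := hB i (by omega) hi2 hp
            have : cc w (m+1) ≤ cc w i := cnt_mono _ (by omega)
            omega
          have hsum' := sum_counts w m (by omega)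
          omega
        rw [if_neg (by omega), if_neg (by omega), if_pos (by omega)]
    · rw [List.getElem?_eq_none (by omega)]
      rw [if_neg (by omega), if_neg (by omega), if_neg (by omega)]
  · rintro ⟨n, hn1, rfl⟩
    set W := List.replicate n (0:Fin 3) ++ List.replicate n 1 ++ List.replicate n 2 with hW
    have hlen : W.length = 3*n := lenw n
    -- filters
    have hFa : (Finset.Icc 1 (3*n)).filter (fun i => (decide (W[i-1]? = some 0)) = true)
        = Finset.Icc 1 n := by
      ext i
      simp only [Finset.mem_filter, Finset.mem_Icc, hW, getw, decide_eq_true_eq]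
      constructor
      · rintro ⟨⟨h1, h2⟩, h3⟩
        split_ifs at h3 with hA hB hC
        all_goals first
          | omega
          | (exact absurd h3 (by decide))
          | (exact absurd h3 (by simp))
      · rintro ⟨h1, h2⟩
        refine ⟨⟨h1, by omega⟩, ?_⟩
        rw [if_pos (by omega)]
    have hFb : (Finset.Icc 1 (3*n)).filter (fun i => (decide (W[i-1]? = some 1)) = true)
        = Finset.Icc (n+1) (2*n) := by
      ext i
      simp only [Finset.mem_filter, Finset.mem_Icc, hW, getw, decide_eq_true_eq]
      constructor
      · rintro ⟨⟨h1, h2⟩, h3⟩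
        split_ifs at h3 with hA hB hC
        all_goals first
          | omega
          | (exact absurd h3 (by decide))
          | (exact absurd h3 (by simp))
      · rintro ⟨h1, h2⟩
        refine ⟨⟨by omega, by omega⟩, ?_⟩
        rw [if_neg (by omega), if_pos (by omega)]
    have hFc : (Finset.Icc 1 (3*n)).filter (fun i => (decide (W[i-1]? = some 2)) = true)
        = Finset.Icc (2*n+1) (3*n) := by
      ext i
      simp only [Finset.mem_filter, Finset.mem_Icc, hW, getw, decide_eq_true_eq]
      constructor
      · rintro ⟨⟨h1, h2⟩, h3⟩
        split_ifs at h3 with hA hB hC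
        all_goals first
          | omega
          | (exact absurd h3 (by decide))
          | (exact absurd h3 (by simp))
      · rintro ⟨h1, h2⟩
        refine ⟨⟨by omega, by omega⟩, ?_⟩
        rw [if_neg (by omega), if_neg (by omega), if_pos (by omega)]
    have hca : ca W (3*n) = n := by
      show cnt _ _ = n
      unfold cnt
      rw [hFa, Nat.card_Icc]; omega
    have hcb : cb W (3*n) = n := by
      show cnt _ _ = n
      unfold cnt
      rw [hFb, Nat.card_Icc]; omega
    have hcc : cc W (3*n) = n := by
      show cnt _ _ = n
      unfold cnt
      rw [hFc, Nat.card_Icc]; omega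
    -- count of b's and c's vanishes on short prefixes
    have hcb0 : ∀ i, i ≤ n → cb W i = 0 := by
      intro i hi
      apply cnt_eq_zero
      intro i' h1 h2
      simp only [hW, getw]
      rw [if_pos (by omega)]
      decide
    have hcc0 : ∀ i, i ≤ 2*n → cc W i = 0 := by
      intro i hi
      apply cnt_eq_zero
      intro i' h1 h2
      simp only [hW, getw]
      rcases Nat.lt_or_ge (i'-1) n with h | h
      · rw [if_pos h]; decide
      · rw [if_neg (by omega), if_pos (by omega)]; decide
    have hFA : (Finset.Icc 1 (3*n)).filter (fun i => QaA W i = true) = Finset.Icc 1 n := by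
      ext i
      constructor
      · intro hi
        simp only [Finset.mem_filter, QaA, Bool.and_eq_true] at hi
        have : i ∈ (Finset.Icc 1 (3*n)).filter
            (fun i => (decide (W[i-1]? = some 0)) = true) := by
          simp only [Finset.mem_filter]
          exact ⟨hi.1, hi.2.1⟩
        rw [hFa] at this
        exact this
      · intro hi
        simp only [Finset.mem_Icc] at hi
        simp only [Finset.mem_filter, Finset.mem_Icc, QaA, Bool.and_eq_true, Arule,
          decide_eq_true_eq]
        refine ⟨⟨hi.1, by omega⟩, ?_, ?_⟩
        · simp only [hW, getw]
          rw [if_pos (by omega)]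
        · rw [hcb0 i (by omega), hcc0 i (by omega)]
    have hFB : (Finset.Icc 1 (3*n)).filter (fun i => QbB W i = true)
        = Finset.Icc (n+1) (2*n) := by
      ext i
      constructor
      · intro hi
        simp only [Finset.mem_filter, QbB, Bool.and_eq_true] at hi
        have : i ∈ (Finset.Icc 1 (3*n)).filter
            (fun i => (decide (W[i-1]? = some 1)) = true) := by
          simp only [Finset.mem_filter]
          exact ⟨hi.1, hi.2.1⟩
        rw [hFb] at this
        exact this
      · intro hi
        simp only [Finset.mem_Icc] at hi
        simp only [Finset.mem_filter, Finset.mem_Icc, QbB, Bool.and_eq_true, Brule,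
          decide_eq_true_eq]
        refine ⟨⟨by omega, by omega⟩, ?_, ?_⟩
        · simp only [hW, getw]
          rw [if_neg (by omega), if_pos (by omega)]
        · rw [hcc0 i (by omega)]
    have hcA : cA W (3*n) = n := by
      show cnt _ _ = n
      unfold cnt
      rw [hFA, Nat.card_Icc]; omega
    have hcB : cB W (3*n) = n := by
      show cnt _ _ = n
      unfold cnt
      rw [hFB, Nat.card_Icc]; omega
    unfold acceptsAnBnCn
    rw [hlen, hca, hcb, hcc, hcA, hcB]
    exact ⟨rfl, rfl, rfl, rfl⟩
end
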